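/- Let 𝒫 be a partition of C into nonempty blocks, let P, Q be distinct blocks, and let 𝒫' be obtained by replacing P and Q with P ∪ Q. If no edge of ℰ joins P and Q, then Ω(𝒫') > Ω(𝒫) whenever F_P ≠ F_Q, and Ω(𝒫') = Ω(𝒫) whenever F_P = F_Q; in particular, merging two non-adjacent blocks never strictly decreases the energy. -/

import Mathlib

/-!
By Huygens' decomposition `∑_{p∈U} ‖f p - c‖² = W(U) + |U|‖F_U - c‖²`, merging disjoint blocks
raises the within-cluster cost by exactly `|P||Q|/(|P|+|Q|) · ‖F_P - F_Q‖²`. When no edge joins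
`P` and `Q`, an edge lies inside `P ∪ Q` only if it lies inside `P` or inside `Q`, so the set of
cut edges, and with it the penalty term, is unchanged.
-/

open Finset

variable {C E : Type*}

noncomputable def mean [NormedAddCommGroup E] [InnerProductSpace ℝ E]
    (f : C → E) (U : Finset C) : E :=
  (U.card : ℝ)⁻¹ • ∑ p ∈ U, f p

noncomputable def cost [NormedAddCommGroup E] [InnerProductSpace ℝ E]
    (f : C → E) (U : Finset C) : ℝ :=
  ∑ p ∈ U, ‖f p - mean f U‖ ^ 2

def IsPartition [Fintype C] (Prt : Finset (Finset C)) : Prop :=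
  (∀ U ∈ Prt, U.Nonempty) ∧ (∀ U ∈ Prt, ∀ V ∈ Prt, U ≠ V → Disjoint U V) ∧
    ∀ p : C, ∃ U ∈ Prt, p ∈ U

open scoped Classical in
/-- Sum of the weights of the edges of `ℰ` whose endpoints lie in different blocks of `Prt`. -/
noncomputable def crossSum (ℰ : Finset (Sym2 C)) (w : Sym2 C → ℝ)
    (Prt : Finset (Finset C)) : ℝ :=
  ∑ e ∈ ℰ.filter (fun e => ¬ ∃ U ∈ Prt, ∀ p ∈ e, p ∈ U), w e

noncomputable def energy [Fintype C] [NormedAddCommGroup E] [InnerProductSpace ℝ E]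
    (f : C → E) (ℰ : Finset (Sym2 C)) (w : Sym2 C → ℝ) (lam : ℝ)
    (Prt : Finset (Finset C)) : ℝ :=
  ∑ U ∈ Prt, cost f U + lam * crossSum ℰ w Prt

open scoped Classical in
/-- Sum of the weights of the edges of `ℰ` joining `P` and `Q`. -/
noncomputable def joinSum (ℰ : Finset (Sym2 C)) (w : Sym2 C → ℝ) (P Q : Finset C) : ℝ :=
  ∑ e ∈ ℰ.filter (fun e => ∃ p ∈ P, ∃ q ∈ Q, e = s(p, q)), w e

noncomputable def mergeGain [NormedAddCommGroup E] [InnerProductSpace ℝ E]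
    (f : C → E) (ℰ : Finset (Sym2 C)) (w : Sym2 C → ℝ) (lam : ℝ)
    (P Q : Finset C) : ℝ :=
  -(((P.card : ℝ) * (Q.card : ℝ)) / ((P.card : ℝ) + (Q.card : ℝ))) *
      ‖mean f P - mean f Q‖ ^ 2
    + lam * joinSum ℰ w P Q

theorem norm_sub_weightedMean_sq {V : Type*} [NormedAddCommGroup V] [NormedSpace ℝ V]
    {n m : ℝ} (hnm : n + m ≠ 0) (a b : V) :
    n * ‖a - (n + m)⁻¹ • (n • a + m • b)‖ ^ 2 + m * ‖b - (n + m)⁻¹ • (n • a + m • b)‖ ^ 2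
      = n * m / (n + m) * ‖a - b‖ ^ 2 := by
  have ha : a - (n + m)⁻¹ • (n • a + m • b) = (m / (n + m)) • (a - b) := by
    match_scalars <;> field_simp
    ring
  have hb : b - (n + m)⁻¹ • (n • a + m • b) = (n / (n + m)) • (b - a) := by
    match_scalars <;> field_simp
    ring
  rw [ha, hb, norm_smul, norm_smul, norm_sub_rev b, mul_pow, mul_pow, Real.norm_eq_abs,
    Real.norm_eq_abs, sq_abs, sq_abs]
  field_simp
  ring

section Variance

variable [NormedAddCommGroup E] [InnerProductSpace ℝ E]

theorem card_smul_mean (f : C → E) (U : Finset C) :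
    (U.card : ℝ) • mean f U = ∑ p ∈ U, f p := by
  rcases U.eq_empty_or_nonempty with rfl | hU
  · simp
  · rw [mean, smul_inv_smul₀ (by exact_mod_cast hU.card_pos.ne')]

theorem sum_norm_sub_sq_eq_cost_add (f : C → E) (U : Finset C) (c : E) :
    ∑ p ∈ U, ‖f p - c‖ ^ 2 = cost f U + (U.card : ℝ) * ‖mean f U - c‖ ^ 2 := by
  have hcentered : ∑ p ∈ U, (f p - mean f U) = 0 := by
    rw [sum_sub_distrib, sum_const, ← Nat.cast_smul_eq_nsmul ℝ, card_smul_mean, sub_self]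
  have hexpand (p : C) : ‖f p - c‖ ^ 2 = ‖f p - mean f U‖ ^ 2
      + 2 * inner ℝ (f p - mean f U) (mean f U - c) + ‖mean f U - c‖ ^ 2 := by
    rw [← norm_add_sq_real, sub_add_sub_cancel]
  rw [sum_congr rfl fun p _ => hexpand p, sum_add_distrib, sum_add_distrib, ← mul_sum,
    ← sum_inner, hcentered, inner_zero_left, sum_const, nsmul_eq_mul, cost]
  ring

theorem mean_union [DecidableEq C] (f : C → E) {P Q : Finset C} (hd : Disjoint P Q) :
    mean f (P ∪ Q) = ((P.card : ℝ) + Q.card)⁻¹ •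
      ((P.card : ℝ) • mean f P + (Q.card : ℝ) • mean f Q) := by
  rw [mean, sum_union hd, card_union_of_disjoint hd, card_smul_mean, card_smul_mean,
    Nat.cast_add]

theorem cost_union [DecidableEq C] (f : C → E) {P Q : Finset C} (hd : Disjoint P Q) :
    cost f (P ∪ Q) = cost f P + cost f Q
      + (P.card : ℝ) * Q.card / ((P.card : ℝ) + Q.card) * ‖mean f P - mean f Q‖ ^ 2 := by
  rcases (P ∪ Q).eq_empty_or_nonempty with hPQ | hPQ
  · obtain ⟨rfl, rfl⟩ := union_eq_empty.mp hPQ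
    simp [cost]
  have hcard : (P.card : ℝ) + Q.card ≠ 0 := by
    rw [← Nat.cast_add, ← card_union_of_disjoint hd]
    exact_mod_cast hPQ.card_pos.ne'
  rw [← norm_sub_weightedMean_sq hcard, ← mean_union f hd, cost, sum_union hd,
    sum_norm_sub_sq_eq_cost_add, sum_norm_sub_sq_eq_cost_add]
  ring

end Variance

theorem exists_mem_merge_iff [DecidableEq C] {R : Finset C → Prop} {Prt : Finset (Finset C)}
    {P Q : Finset C} (hP : P ∈ Prt) (hQ : Q ∈ Prt) (hR : R (P ∪ Q) ↔ R P ∨ R Q) :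
    (∃ U ∈ insert (P ∪ Q) ((Prt.erase P).erase Q), R U) ↔ ∃ U ∈ Prt, R U := by
  simp only [exists_mem_insert, mem_erase, hR]
  constructor
  · rintro ((h | h) | ⟨U, ⟨-, -, hU⟩, h⟩)
    exacts [⟨P, hP, h⟩, ⟨Q, hQ, h⟩, ⟨U, hU, h⟩]
  · rintro ⟨U, hU, h⟩
    by_cases hUP : U = P
    · exact Or.inl (Or.inl (hUP ▸ h))
    by_cases hUQ : U = Q
    · exact Or.inl (Or.inr (hUQ ▸ h))
    exact Or.inr ⟨U, ⟨hUQ, hUP, hU⟩, h⟩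

theorem Sym2.forall_mem_union_iff [DecidableEq C] {P Q : Finset C} {e : Sym2 C}
    (he : ¬ ∃ p ∈ P, ∃ q ∈ Q, e = s(p, q)) :
    (∀ x ∈ e, x ∈ P ∪ Q) ↔ (∀ x ∈ e, x ∈ P) ∨ (∀ x ∈ e, x ∈ Q) := by
  induction e using Sym2.ind with
  | _ a b =>
  simp only [Sym2.mem_iff, forall_eq_or_imp, forall_eq, mem_union]
  constructor
  · rintro ⟨ha | ha, hb | hb⟩
    · exact Or.inl ⟨ha, hb⟩
    · exact absurd ⟨a, ha, b, hb, rfl⟩ he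
    · exact absurd ⟨b, hb, a, ha, Sym2.eq_swap⟩ he
    · exact Or.inr ⟨ha, hb⟩
  · rintro (⟨ha, hb⟩ | ⟨ha, hb⟩)
    exacts [⟨Or.inl ha, Or.inl hb⟩, ⟨Or.inr ha, Or.inr hb⟩]

theorem crossSum_merge_of_no_edge [DecidableEq C] {ℰ : Finset (Sym2 C)} (w : Sym2 C → ℝ)
    {Prt : Finset (Finset C)} {P Q : Finset C} (hP : P ∈ Prt) (hQ : Q ∈ Prt)
    (hnoedge : ∀ e ∈ ℰ, ¬ ∃ p ∈ P, ∃ q ∈ Q, e = s(p, q)) :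
    crossSum ℰ w (insert (P ∪ Q) ((Prt.erase P).erase Q)) = crossSum ℰ w Prt := by
  classical
  unfold crossSum
  congr 1
  exact filter_congr fun e he =>
    not_congr (exists_mem_merge_iff hP hQ (Sym2.forall_mem_union_iff (hnoedge e he)))

theorem IsPartition.union_notMem_erase_erase [Fintype C] [DecidableEq C]
    {Prt : Finset (Finset C)} (hPrt : IsPartition Prt) {P : Finset C} (hP : P ∈ Prt)
    (Q : Finset C) : P ∪ Q ∉ (Prt.erase P).erase Q := by
  intro hmem
  obtain ⟨hne, hmem⟩ := mem_erase.mp (mem_erase.mp hmem).2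
  obtain ⟨p, hp⟩ := hPrt.1 P hP
  exact disjoint_left.mp (hPrt.2.1 _ hmem _ hP hne) (mem_union_left Q hp) hp

theorem energy_merge_of_no_edge [Fintype C] [DecidableEq C] [NormedAddCommGroup E]
    [InnerProductSpace ℝ E] (f : C → E) (ℰ : Finset (Sym2 C)) (w : Sym2 C → ℝ) (lam : ℝ)
    {Prt : Finset (Finset C)} (hPrt : IsPartition Prt) {P Q : Finset C} (hP : P ∈ Prt)
    (hQ : Q ∈ Prt) (hPQ : P ≠ Q) (hnoedge : ∀ e ∈ ℰ, ¬ ∃ p ∈ P, ∃ q ∈ Q, e = s(p, q)) :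
    energy f ℰ w lam (insert (P ∪ Q) ((Prt.erase P).erase Q)) = energy f ℰ w lam Prt
      + (P.card : ℝ) * Q.card / ((P.card : ℝ) + Q.card) * ‖mean f P - mean f Q‖ ^ 2 := by
  have hQ' : Q ∈ Prt.erase P := mem_erase.mpr ⟨hPQ.symm, hQ⟩
  rw [energy, energy, crossSum_merge_of_no_edge w hP hQ hnoedge,
    sum_insert (hPrt.union_notMem_erase_erase hP Q),
    cost_union f (hPrt.2.1 P hP Q hQ hPQ), ← add_sum_erase _ _ hP, ← add_sum_erase _ _ hQ']
  ring

theorem merge_nonadjacent_blocks_general [Fintype C] [DecidableEq C]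
    [NormedAddCommGroup E] [InnerProductSpace ℝ E]
    (f : C → E) (ℰ : Finset (Sym2 C))
    (w : Sym2 C → ℝ) (lam : ℝ)
    (Prt : Finset (Finset C)) (hPrt : IsPartition Prt)
    (P Q : Finset C) (hP : P ∈ Prt) (hQ : Q ∈ Prt) (hPQ : P ≠ Q)
    (hnoedge : ∀ e ∈ ℰ, ¬ ∃ p ∈ P, ∃ q ∈ Q, e = s(p, q)) :
    (mean f P ≠ mean f Q →
      energy f ℰ w lam Prt <
        energy f ℰ w lam (insert (P ∪ Q) ((Prt.erase P).erase Q))) ∧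
    (mean f P = mean f Q →
      energy f ℰ w lam (insert (P ∪ Q) ((Prt.erase P).erase Q)) =
        energy f ℰ w lam Prt) := by
  rw [energy_merge_of_no_edge f ℰ w lam hPrt hP hQ hPQ hnoedge]
  refine ⟨fun hmeans => ?_, fun hmeans => by simp [hmeans]⟩
  have hweight : 0 < (P.card : ℝ) * Q.card / ((P.card : ℝ) + Q.card) := by
    have := (hPrt.1 P hP).card_pos
    have := (hPrt.1 Q hQ).card_pos
    positivity
  have hgap : 0 < ‖mean f P - mean f Q‖ ^ 2 :=
    pow_pos (norm_pos_iff.mpr (sub_ne_zero.mpr hmeans)) 2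
  linarith [mul_pos hweight hgap]

/-- If no edge of `ℰ` joins the distinct blocks `P` and `Q`, then merging
them strictly increases the energy when `F_P ≠ F_Q`, and leaves it unchanged when
`F_P = F_Q`; in particular, merging non-adjacent blocks never strictly decreases the
energy. -/
theorem merge_nonadjacent_blocks [Fintype C] [DecidableEq C]
    [NormedAddCommGroup E] [InnerProductSpace ℝ E]
    (f : C → E) (ℰ : Finset (Sym2 C)) (hℰ : ∀ e ∈ ℰ, ¬ e.IsDiag)
    (w : Sym2 C → ℝ) (hw : ∀ e ∈ ℰ, 0 < w e) (lam : ℝ) (hlam : 0 < lam)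
    (Prt : Finset (Finset C)) (hPrt : IsPartition Prt)
    (P Q : Finset C) (hP : P ∈ Prt) (hQ : Q ∈ Prt) (hPQ : P ≠ Q)
    (hnoedge : ∀ e ∈ ℰ, ¬ ∃ p ∈ P, ∃ q ∈ Q, e = s(p, q)) :
    (mean f P ≠ mean f Q →
      energy f ℰ w lam Prt <
        energy f ℰ w lam (insert (P ∪ Q) ((Prt.erase P).erase Q))) ∧
    (mean f P = mean f Q →
      energy f ℰ w lam (insert (P ∪ Q) ((Prt.erase P).erase Q)) =
        energy f ℰ w lam Prt) :=
  merge_nonadjacent_blocks_general f ℰ w lam Prt hPrt P Q hP hQ hPQ hnoedge
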